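/- arXiv:2404.13490 — 3 statements merged into one kernel-verified Lean document; each statement's English description precedes it below -/
import Mathlib

section
/- Let S_n and S'_n be two independent elephant random walks on ℤ with the same memory parameter p ∈ (3/4, 1). Then there exists a random variable M with P(M ≠ 0) = 1 such that (S_n - S'_n)/n^{2p-1} → M almost surely as n → ∞. -/
open MeasureTheory ProbabilityTheory Filter

/-- The elephant random walk with memory parameter `p` and initial parameter `s`:
the steps `X n` (for `n ≥ 1`) take values `±1`, the first step is `+1` with
probability `s`, and conditionally on the first `n` steps the expected value of
`X (n + 1)` is `((2p - 1)/n) · S_n` where `S_n = X_1 + ⋯ + X_n`.  Since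
`X (n + 1) ∈ {-1, 1}`, this conditional mean characterizes the ERW transition
law: `X (n + 1) = X_{U_n}` with probability `p` and `= -X_{U_n}` with
probability `1 - p`, `U_n` uniform on `{1, …, n}`. -/
structure IsERW {Ω : Type*} [MeasurableSpace Ω] (μ : Measure Ω) (p s : ℝ)
    (X : ℕ → Ω → ℝ) : Prop where
  measurable : ∀ n, Measurable (X n)
  pm_one : ∀ n, 1 ≤ n → ∀ ω, X n ω = 1 ∨ X n ω = -1
  first : μ {ω | X 1 ω = 1} = ENNReal.ofReal s
  cond : ∀ n, 1 ≤ n →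
    μ[X (n + 1) | MeasurableSpace.comap
        (fun ω => fun i : Finset.Icc 1 n => X i ω) MeasurableSpace.pi]
      =ᵐ[μ] fun ω => (2 * p - 1) / n * ∑ i ∈ Finset.Icc 1 n, X i ω

/-- If a measurable sequence of functions on the path space `ℕ → ℝ` converges
`μ`-a.e. along a measurable map `π` to a limit `L`, then `L` factors a.e. as a
measurable function of `π`. -/
lemma erw_aux_factor {Ω : Type*} [MeasurableSpace Ω] (μ : Measure Ω)
    {π : Ω → ℕ → ℝ} (hπ : Measurable π) {f : ℕ → (ℕ → ℝ) → ℝ}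
    (hf : ∀ n, Measurable (f n)) {L : Ω → ℝ}
    (h : ∀ᵐ ω ∂μ, Filter.Tendsto (fun n => f n (π ω)) atTop (nhds (L ω))) :
    ∃ F : (ℕ → ℝ) → ℝ, Measurable F ∧ ∀ᵐ ω ∂μ, L ω = F (π ω) := by
  have hν : ∀ᵐ x ∂(μ.map π), ∃ c, Filter.Tendsto (fun n => f n x) atTop (nhds c) := by
    rw [ae_map_iff hπ.aemeasurable (measurableSet_exists_tendsto hf)]
    exact h.mono fun ω hω => ⟨L ω, hω⟩
  obtain ⟨F, hFm, hFt⟩ :=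
    measurable_limit_of_tendsto_metrizable_ae (fun n => (hf n).aemeasurable) hν
  have hFt' : ∀ᵐ ω ∂μ, Filter.Tendsto (fun n => f n (π ω)) atTop (nhds (F (π ω))) :=
    (ae_map_iff hπ.aemeasurable (measurableSet_tendsto_fun hf hFm)).mp hFt
  refine ⟨F, hFm, ?_⟩
  filter_upwards [h, hFt'] with ω h1 h2
  exact tendsto_nhds_unique h1 h2

/-- For two independent elephant random walks with the same memory parameter
`p ∈ (3/4, 1)`, there is a random variable `M` with `P(M ≠ 0) = 1` such that
`(S_n - S'_n)/n^{2p-1} → M` almost surely.  One may assume the known result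
that `S_n / n^{2p-1}` converges a.s. to a random variable with an atomless
distribution (hypotheses `hLconv`, `hatomL`, and the primed versions). -/
theorem erw_diff_superdiffusive {Ω : Type*} [MeasurableSpace Ω]
    (μ : Measure Ω) [IsProbabilityMeasure μ] (p s s' : ℝ)
    (hp : 3 / 4 < p) (hp1 : p < 1) (X X' : ℕ → Ω → ℝ)
    (hX : IsERW μ p s X) (hX' : IsERW μ p s' X')
    (hindep : IndepFun (fun ω => fun n : ℕ => X n ω)
      (fun ω => fun n : ℕ => X' n ω) μ)
    (L L' : Ω → ℝ) (hL : Measurable L) (hL' : Measurable L')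
    (hLconv : ∀ᵐ ω ∂μ, Filter.Tendsto
      (fun n : ℕ => (∑ i ∈ Finset.Icc 1 n, X i ω) / (n : ℝ) ^ (2 * p - 1))
      Filter.atTop (nhds (L ω)))
    (hLconv' : ∀ᵐ ω ∂μ, Filter.Tendsto
      (fun n : ℕ => (∑ i ∈ Finset.Icc 1 n, X' i ω) / (n : ℝ) ^ (2 * p - 1))
      Filter.atTop (nhds (L' ω)))
    (hatomL : ∀ c : ℝ, μ {ω | L ω = c} = 0)
    (hatomL' : ∀ c : ℝ, μ {ω | L' ω = c} = 0) :
    ∃ M : Ω → ℝ, μ {ω | M ω ≠ 0} = 1 ∧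
      ∀ᵐ ω ∂μ, Filter.Tendsto
        (fun n : ℕ => (∑ i ∈ Finset.Icc 1 n, X i ω - ∑ i ∈ Finset.Icc 1 n, X' i ω)
          / (n : ℝ) ^ (2 * p - 1))
        Filter.atTop (nhds (M ω)) := by
  classical
  set f : ℕ → (ℕ → ℝ) → ℝ :=
    fun n x => (∑ i ∈ Finset.Icc 1 n, x i) / (n : ℝ) ^ (2 * p - 1) with hfdef
  have hf : ∀ n, Measurable (f n) := fun n =>
    (Finset.measurable_sum _ fun i _ => measurable_pi_apply i).div_const _
  have hπ : Measurable (fun ω => fun n : ℕ => X n ω) :=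
    measurable_pi_lambda _ hX.measurable
  have hπ' : Measurable (fun ω => fun n : ℕ => X' n ω) :=
    measurable_pi_lambda _ hX'.measurable
  obtain ⟨F, hFm, hFeq⟩ := erw_aux_factor μ hπ hf hLconv
  obtain ⟨F', hF'm, hF'eq⟩ := erw_aux_factor μ hπ' hf hLconv'
  set g : Ω → ℝ := fun ω => F (fun n : ℕ => X n ω) with hgdef
  set g' : Ω → ℝ := fun ω => F' (fun n : ℕ => X' n ω) with hg'def
  have hg : Measurable g := hFm.comp hπ
  have hg' : Measurable g' := hF'm.comp hπ'
  have hind2 : IndepFun g g' μ := hindep.comp hFm hF'm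
  -- the key computation: μ {g = g'} = 0
  have hdiag : μ {ω | g ω = g' ω} = 0 := by
    have hmap := (indepFun_iff_map_prod_eq_prod_map_map hg.aemeasurable
      hg'.aemeasurable).mp hind2
    have hDset : MeasurableSet {q : ℝ × ℝ | q.1 = q.2} :=
      measurableSet_eq_fun measurable_fst measurable_snd
    have h1 : μ {ω | g ω = g' ω}
        = (μ.map (fun ω => (g ω, g' ω))) {q : ℝ × ℝ | q.1 = q.2} := by
      rw [Measure.map_apply (hg.prodMk hg') hDset]
      rfl
    rw [h1, hmap, Measure.prod_apply hDset]
    have h2 : ∀ x : ℝ, (μ.map g') (Prod.mk x ⁻¹' {q : ℝ × ℝ | q.1 = q.2}) = 0 := by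
      intro x
      have hpre : Prod.mk x ⁻¹' {q : ℝ × ℝ | q.1 = q.2} = {x} := by
        ext y; simp [eq_comm]
      rw [hpre, Measure.map_apply hg' (measurableSet_singleton x)]
      have : μ (g' ⁻¹' {x}) = μ {ω | L' ω = x} := by
        apply measure_congr
        rw [Filter.eventuallyEq_set]
        filter_upwards [hF'eq] with ω hω
        simp [Set.mem_preimage, hω, hg'def]
      rw [this, hatomL' x]
    simp only [h2, lintegral_zero]
  -- now take M = L - L'
  refine ⟨fun ω => L ω - L' ω, ?_, ?_⟩
  · have hM : Measurable fun ω => L ω - L' ω := hL.sub hL'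
    have hzero : μ {ω | L ω - L' ω = 0} = 0 := by
      have : μ {ω | L ω - L' ω = 0} = μ {ω | g ω = g' ω} := by
        apply measure_congr
        rw [Filter.eventuallyEq_set]
        filter_upwards [hFeq, hF'eq] with ω h1 h2
        simp only [Set.mem_setOf_eq, sub_eq_zero, h1, h2, hgdef, hg'def]
      rw [this, hdiag]
    have hms : MeasurableSet {ω | (fun ω => L ω - L' ω) ω = 0} :=
      hM (measurableSet_singleton 0)
    have : {ω | (fun ω => L ω - L' ω) ω ≠ 0} = {ω | (fun ω => L ω - L' ω) ω = 0}ᶜ := by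
      ext ω; simp
    rw [this, prob_compl_eq_one_iff hms]
    exact hzero
  · filter_upwards [hLconv, hLconv'] with ω h1 h2
    have := h1.sub h2
    simpa [sub_div] using this
end

section
/- Let S_n and S'_n be two independent elephant random walks on ℤ with the same memory parameter p ∈ (3/4, 1). Then almost surely S_n = S'_n for only finitely many n; i.e., the two walks meet each other only finitely often. -/
open MeasureTheory ProbabilityTheory Filter

/-- If `f` and `g` are independent and the law of `g` is atomless, then `f = g`
with probability zero. -/
lemma indepFun_eq_measure_zero {Ω : Type*} [MeasurableSpace Ω]
    (μ : Measure Ω) [IsProbabilityMeasure μ] {f g : Ω → ℝ}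
    (hf : Measurable f) (hg : Measurable g) (h : IndepFun f g μ)
    (hg0 : ∀ c : ℝ, μ {ω | g ω = c} = 0) : μ {ω | f ω = g ω} = 0 := by
  have hmap := (indepFun_iff_map_prod_eq_prod_map_map hf.aemeasurable hg.aemeasurable).1 h
  have hdiag : MeasurableSet {q : ℝ × ℝ | q.1 = q.2} :=
    measurableSet_eq_fun measurable_fst measurable_snd
  have h1 : μ {ω | f ω = g ω} = μ.map (fun ω => (f ω, g ω)) {q : ℝ × ℝ | q.1 = q.2} := by
    rw [Measure.map_apply (hf.prodMk hg) hdiag]; rfl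
  rw [h1, hmap, Measure.prod_apply hdiag]
  have h2 : ∀ x : ℝ, (μ.map g) (Prod.mk x ⁻¹' {q : ℝ × ℝ | q.1 = q.2}) = 0 := by
    intro x
    have : (Prod.mk x ⁻¹' {q : ℝ × ℝ | q.1 = q.2}) = {x} := by
      ext y; simp [eq_comm]
    rw [this, Measure.map_apply hg (measurableSet_singleton x)]
    simpa [Set.preimage, Set.mem_singleton_iff] using hg0 x
  rw [lintegral_congr h2, lintegral_zero]

/-- Two independent elephant random walks with the same memory parameter
`p ∈ (3/4, 1)` meet each other only finitely often, almost surely.  One may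
assume the known a.s. convergence `S_n/n^{2p-1} → L` with `L` atomless, and
likewise for the independent copy. -/
theorem erw_meet_finitely_often {Ω : Type*} [MeasurableSpace Ω]
    (μ : Measure Ω) [IsProbabilityMeasure μ] (p s s' : ℝ)
    (hp : 3 / 4 < p) (hp1 : p < 1) (X X' : ℕ → Ω → ℝ)
    (hX : IsERW μ p s X) (hX' : IsERW μ p s' X')
    (hindep : IndepFun (fun ω => fun n : ℕ => X n ω)
      (fun ω => fun n : ℕ => X' n ω) μ)
    (L L' : Ω → ℝ) (hL : Measurable L) (hL' : Measurable L')
    (hLconv : ∀ᵐ ω ∂μ, Filter.Tendsto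
      (fun n : ℕ => (∑ i ∈ Finset.Icc 1 n, X i ω) / (n : ℝ) ^ (2 * p - 1))
      Filter.atTop (nhds (L ω)))
    (hLconv' : ∀ᵐ ω ∂μ, Filter.Tendsto
      (fun n : ℕ => (∑ i ∈ Finset.Icc 1 n, X' i ω) / (n : ℝ) ^ (2 * p - 1))
      Filter.atTop (nhds (L' ω)))
    (hatomL : ∀ c : ℝ, μ {ω | L ω = c} = 0)
    (hatomL' : ∀ c : ℝ, μ {ω | L' ω = c} = 0) :
    ∀ᵐ ω ∂μ, {n : ℕ |
      ∑ i ∈ Finset.Icc 1 n, X i ω = ∑ i ∈ Finset.Icc 1 n, X' i ω}.Finite := by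
  -- A measurable "limit functional" on path space.
  set F : (ℕ → ℝ) → ℝ := fun x =>
    Filter.limsup (fun n : ℕ => (∑ i ∈ Finset.Icc 1 n, x i) / (n : ℝ) ^ (2 * p - 1))
      Filter.atTop with hF_def
  have hF : Measurable F := by
    apply Measurable.limsup
    intro n
    exact (Finset.measurable_sum _ fun i _ => measurable_pi_apply (i : ℕ)).div_const _
  -- `F ∘ paths` equals `L` a.e., and similarly for `L'`.
  have hLeq : (fun ω => F (fun n => X n ω)) =ᵐ[μ] L := by
    filter_upwards [hLconv] with ω h using h.limsup_eq
  have hLeq' : (fun ω => F (fun n => X' n ω)) =ᵐ[μ] L' := by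
    filter_upwards [hLconv'] with ω h using h.limsup_eq
  -- Hence `L` and `L'` are independent.
  have hindepL : IndepFun L L' μ :=
    (hindep.comp hF hF).congr hLeq hLeq'
  have hzero : μ {ω | L ω = L' ω} = 0 :=
    indepFun_eq_measure_zero μ hL hL' hindepL hatomL'
  have hane : ∀ᵐ ω ∂μ, L ω ≠ L' ω := by
    rw [ae_iff]; simpa using hzero
  filter_upwards [hLconv, hLconv', hane] with ω hA hB hne
  have hsub : Filter.Tendsto
      (fun n : ℕ => (∑ i ∈ Finset.Icc 1 n, X i ω) / (n : ℝ) ^ (2 * p - 1)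
        - (∑ i ∈ Finset.Icc 1 n, X' i ω) / (n : ℝ) ^ (2 * p - 1))
      Filter.atTop (nhds (L ω - L' ω)) := hA.sub hB
  have hevent : ∀ᶠ n in Filter.atTop,
      (∑ i ∈ Finset.Icc 1 n, X i ω) / (n : ℝ) ^ (2 * p - 1)
        - (∑ i ∈ Finset.Icc 1 n, X' i ω) / (n : ℝ) ^ (2 * p - 1) ≠ 0 :=
    hsub.eventually_ne (sub_ne_zero.mpr hne)
  obtain ⟨N, hN⟩ := Filter.eventually_atTop.mp hevent
  apply Set.Finite.subset (Set.finite_Iic N)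
  intro n hn
  by_contra hcon
  simp only [Set.mem_Iic, not_le] at hcon
  have hn' := hN n hcon.le
  apply hn'
  rw [Set.mem_setOf_eq] at hn
  rw [hn, sub_self]
end

section
/- Let S_n and S'_n be two independent elephant random walks on ℤ with the same memory parameter p ∈ (0, 3/4]. Then almost surely S_n = S'_n for infinitely many n; i.e., the two walks meet infinitely often. -/
open MeasureTheory ProbabilityTheory Filter

section ErwAux

open Filter

lemma erw_freq_pos_of_limsup {g : ℕ → ℝ} {c : ℝ} (hc : 0 < c)
    (h : Filter.limsup g Filter.atTop = c) : ∃ᶠ n in Filter.atTop, 0 < g n := by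
  by_contra hcon
  rw [Filter.not_frequently] at hcon
  have h0 : (0:ℝ) ∈ {a : ℝ | ∀ᶠ n in Filter.atTop, g n ≤ a} :=
    hcon.mono (fun n hn => not_lt.mp hn)
  rw [Filter.limsup_eq] at h
  by_cases hbd : BddBelow {a : ℝ | ∀ᶠ n in Filter.atTop, g n ≤ a}
  · have := csInf_le hbd h0
    rw [h] at this; linarith
  · rw [Real.sInf_of_not_bddBelow hbd] at h; linarith

lemma erw_cross_zero (f : ℕ → ℝ) (heven : ∀ n, ∃ k : ℤ, f n = 2 * k)
    (hstep : ∀ n, |f (n + 1) - f n| ≤ 2)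
    (a b : ℕ) (hab : a ≤ b) (ha : 0 < f a) (hb : f b < 0) :
    ∃ m, a ≤ m ∧ f m = 0 := by
  by_contra h
  push_neg at h
  have key : ∀ m, a ≤ m → m ≤ b → 0 < f m := by
    intro m
    induction m with
    | zero =>
      intro ha0 _
      have : a = 0 := Nat.le_zero.mp ha0
      rwa [← this]
    | succ k ih =>
      intro hak hkb
      rcases Nat.lt_or_ge a (k + 1) with h1 | h2
      · have hak' : a ≤ k := Nat.lt_succ_iff.mp h1
        have hk : 0 < f k := ih hak' (le_trans (Nat.le_succ k) hkb)
        obtain ⟨j, hj⟩ := heven k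
        have hj0 : (0:ℝ) < (j:ℝ) := by nlinarith
        have hj1 : (1:ℤ) ≤ j := by exact_mod_cast hj0
        have h2k : (2:ℝ) ≤ f k := by
          rw [hj]
          have : (1:ℝ) ≤ (j:ℝ) := by exact_mod_cast hj1
          linarith
        have hs := (abs_le.mp (hstep k)).1
        have h0 : 0 ≤ f (k + 1) := by linarith
        exact lt_of_le_of_ne h0 (Ne.symm (h (k + 1) hak))
      · have : a = k + 1 := le_antisymm hak h2
        rwa [← this]
  exact absurd (key b hab le_rfl) (not_lt.mpr (le_of_lt hb))

lemma erw_meets_infinite (f : ℕ → ℝ) (heven : ∀ n, ∃ k : ℤ, f n = 2 * k)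
    (hstep : ∀ n, |f (n + 1) - f n| ≤ 2)
    (hpos : ∃ᶠ n in Filter.atTop, 0 < f n)
    (hneg : ∃ᶠ n in Filter.atTop, f n < 0) :
    {n : ℕ | f n = 0}.Infinite := by
  apply Set.infinite_of_forall_exists_gt
  intro N
  obtain ⟨a, haN, ha⟩ := (Filter.frequently_atTop.mp hpos) (N + 1)
  obtain ⟨b, hba, hb⟩ := (Filter.frequently_atTop.mp hneg) a
  obtain ⟨m, ham, hm⟩ := erw_cross_zero f heven hstep a b hba ha hb
  exact ⟨m, hm, by omega⟩

lemma erw_pm_step (x y : ℕ → ℝ) (hx : ∀ n, 1 ≤ n → x n = 1 ∨ x n = -1)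
    (hy : ∀ n, 1 ≤ n → y n = 1 ∨ y n = -1) (n : ℕ) :
    |(∑ i ∈ Finset.Icc 1 (n + 1), x i - ∑ i ∈ Finset.Icc 1 (n + 1), y i)
      - (∑ i ∈ Finset.Icc 1 n, x i - ∑ i ∈ Finset.Icc 1 n, y i)| ≤ 2 := by
  rw [Finset.sum_Icc_succ_top (by omega : 1 ≤ n + 1) x,
    Finset.sum_Icc_succ_top (by omega : 1 ≤ n + 1) y]
  have : (∑ i ∈ Finset.Icc 1 n, x i + x (n + 1)
      - (∑ i ∈ Finset.Icc 1 n, y i + y (n + 1)))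
      - (∑ i ∈ Finset.Icc 1 n, x i - ∑ i ∈ Finset.Icc 1 n, y i)
      = x (n + 1) - y (n + 1) := by ring
  rw [this]
  rcases hx (n + 1) (by omega) with h | h <;> rcases hy (n + 1) (by omega) with h' | h' <;>
    rw [h, h'] <;> norm_num

lemma erw_pm_even (x y : ℕ → ℝ) (hx : ∀ n, 1 ≤ n → x n = 1 ∨ x n = -1)
    (hy : ∀ n, 1 ≤ n → y n = 1 ∨ y n = -1) :
    ∀ n, ∃ k : ℤ, ∑ i ∈ Finset.Icc 1 n, x i - ∑ i ∈ Finset.Icc 1 n, y i = 2 * k := by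
  intro n
  induction n with
  | zero => exact ⟨0, by simp⟩
  | succ m ih =>
    obtain ⟨k, hk⟩ := ih
    rw [Finset.sum_Icc_succ_top (by omega : 1 ≤ m + 1) x,
      Finset.sum_Icc_succ_top (by omega : 1 ≤ m + 1) y]
    rcases hx (m + 1) (by omega) with h | h <;> rcases hy (m + 1) (by omega) with h' | h'
    · exact ⟨k, by rw [h, h']; push_cast; linarith⟩
    · exact ⟨k + 1, by rw [h, h']; push_cast; linarith⟩
    · exact ⟨k - 1, by rw [h, h']; push_cast; linarith⟩
    · exact ⟨k, by rw [h, h']; push_cast; linarith⟩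

lemma erw_a_pos_sub : ∀ᶠ n : ℕ in Filter.atTop,
    0 < Real.sqrt (n * Real.log (Real.log n)) := by
  filter_upwards [Filter.eventually_ge_atTop 3] with n hn
  have hn3 : (3:ℝ) ≤ n := by exact_mod_cast hn
  have h1 : 1 < Real.log n := by
    rw [Real.lt_log_iff_exp_lt (by linarith)]
    have := Real.exp_one_lt_d9
    linarith
  have h2 : 0 < Real.log (Real.log n) := Real.log_pos h1
  exact Real.sqrt_pos.mpr (mul_pos (by linarith : (0:ℝ) < n) h2)

lemma erw_a_pos_crit : ∀ᶠ n : ℕ in Filter.atTop,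
    0 < Real.sqrt (n * Real.log n * Real.log (Real.log (Real.log n))) := by
  filter_upwards [Filter.eventually_ge_atTop 16] with n hn
  have hn16 : (16:ℝ) ≤ n := by exact_mod_cast hn
  have hlog16 : Real.exp 1 < Real.log 16 := by
    have h2 : (0.6931471803:ℝ) < Real.log 2 := Real.log_two_gt_d9
    have he : Real.exp 1 < 2.7182818286 := Real.exp_one_lt_d9
    have h16 : Real.log 16 = 4 * Real.log 2 := by
      rw [show (16:ℝ) = 2 ^ (4:ℕ) by norm_num, Real.log_pow]; push_cast; ring
    rw [h16]; linarith
  have hexp : Real.exp 1 < Real.log n :=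
    lt_of_lt_of_le hlog16 (Real.log_le_log (by norm_num) hn16)
  have hlogn_pos : 0 < Real.log n := lt_trans (Real.exp_pos 1) hexp
  have h2 : 1 < Real.log (Real.log n) := (Real.lt_log_iff_exp_lt hlogn_pos).mpr hexp
  have h3 : 0 < Real.log (Real.log (Real.log n)) := Real.log_pos h2
  exact Real.sqrt_pos.mpr (mul_pos (mul_pos (by linarith : (0:ℝ) < n) (by linarith)) h3)

lemma erw_pos_of_div_pos {x y : ℝ} (hx : 0 < x / y) (hy : 0 < y) : 0 < x := by
  rcases div_pos_iff.mp hx with ⟨h, _⟩ | ⟨_, h⟩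
  · exact h
  · linarith

end ErwAux

/-- Two independent elephant random walks with the same memory parameter
`p ∈ (0, 3/4]` meet each other infinitely often, almost surely.  One may assume
the laws of the iterated logarithm for `±(S_n - S'_n)` (hypotheses `hlil_sub`
for `p < 3/4` and `hlil_crit` for `p = 3/4`). -/
theorem erw_meet_infinitely_often {Ω : Type*} [MeasurableSpace Ω]
    (μ : Measure Ω) [IsProbabilityMeasure μ] (p s s' : ℝ)
    (hp0 : 0 < p) (hp : p ≤ 3 / 4) (X X' : ℕ → Ω → ℝ)
    (hX : IsERW μ p s X) (hX' : IsERW μ p s' X')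
    (hindep : IndepFun (fun ω => fun n : ℕ => X n ω)
      (fun ω => fun n : ℕ => X' n ω) μ)
    (hlil_sub : p < 3 / 4 → ∀ᵐ ω ∂μ,
      Filter.limsup (fun n : ℕ =>
          (∑ i ∈ Finset.Icc 1 n, X i ω - ∑ i ∈ Finset.Icc 1 n, X' i ω)
            / Real.sqrt (n * Real.log (Real.log n))) Filter.atTop
        = 2 / Real.sqrt (3 - 4 * p) ∧
      Filter.limsup (fun n : ℕ =>
          (∑ i ∈ Finset.Icc 1 n, X' i ω - ∑ i ∈ Finset.Icc 1 n, X i ω)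
            / Real.sqrt (n * Real.log (Real.log n))) Filter.atTop
        = 2 / Real.sqrt (3 - 4 * p))
    (hlil_crit : p = 3 / 4 → ∀ᵐ ω ∂μ,
      Filter.limsup (fun n : ℕ =>
          (∑ i ∈ Finset.Icc 1 n, X i ω - ∑ i ∈ Finset.Icc 1 n, X' i ω)
            / Real.sqrt (n * Real.log n * Real.log (Real.log (Real.log n))))
        Filter.atTop = 2 ∧
      Filter.limsup (fun n : ℕ =>
          (∑ i ∈ Finset.Icc 1 n, X' i ω - ∑ i ∈ Finset.Icc 1 n, X i ω)
            / Real.sqrt (n * Real.log n * Real.log (Real.log (Real.log n))))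
        Filter.atTop = 2) :
    ∀ᵐ ω ∂μ, {n : ℕ |
      ∑ i ∈ Finset.Icc 1 n, X i ω = ∑ i ∈ Finset.Icc 1 n, X' i ω}.Infinite := by
  have hstep : ∀ ω n, |(∑ i ∈ Finset.Icc 1 (n + 1), X i ω - ∑ i ∈ Finset.Icc 1 (n + 1), X' i ω)
      - (∑ i ∈ Finset.Icc 1 n, X i ω - ∑ i ∈ Finset.Icc 1 n, X' i ω)| ≤ 2 := by
    intro ω n
    exact erw_pm_step (fun i => X i ω) (fun i => X' i ω)
      (fun m hm => hX.pm_one m hm ω) (fun m hm => hX'.pm_one m hm ω) n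
  have heven : ∀ ω n, ∃ k : ℤ,
      ∑ i ∈ Finset.Icc 1 n, X i ω - ∑ i ∈ Finset.Icc 1 n, X' i ω = 2 * k := by
    intro ω
    exact erw_pm_even (fun i => X i ω) (fun i => X' i ω)
      (fun m hm => hX.pm_one m hm ω) (fun m hm => hX'.pm_one m hm ω)
  have hgoal : ∀ ω,
      (∃ᶠ n in Filter.atTop, 0 < ∑ i ∈ Finset.Icc 1 n, X i ω - ∑ i ∈ Finset.Icc 1 n, X' i ω) →
      (∃ᶠ n in Filter.atTop, ∑ i ∈ Finset.Icc 1 n, X i ω - ∑ i ∈ Finset.Icc 1 n, X' i ω < 0) →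
      {n : ℕ | ∑ i ∈ Finset.Icc 1 n, X i ω = ∑ i ∈ Finset.Icc 1 n, X' i ω}.Infinite := by
    intro ω hpos hneg
    have := erw_meets_infinite
      (fun n => ∑ i ∈ Finset.Icc 1 n, X i ω - ∑ i ∈ Finset.Icc 1 n, X' i ω)
      (heven ω) (hstep ω) hpos hneg
    have hset : {n : ℕ | ∑ i ∈ Finset.Icc 1 n, X i ω = ∑ i ∈ Finset.Icc 1 n, X' i ω}
        = {n : ℕ | ∑ i ∈ Finset.Icc 1 n, X i ω - ∑ i ∈ Finset.Icc 1 n, X' i ω = 0} := by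
      ext n; simp [sub_eq_zero]
    rw [hset]
    exact this
  rcases lt_or_eq_of_le hp with hplt | hpeq
  · filter_upwards [hlil_sub hplt] with ω hω
    have hc : 0 < 2 / Real.sqrt (3 - 4 * p) :=
      div_pos two_pos (Real.sqrt_pos.mpr (by linarith))
    have hfp := erw_freq_pos_of_limsup hc hω.1
    have hfn := erw_freq_pos_of_limsup hc hω.2
    apply hgoal ω
    · refine (hfp.and_eventually erw_a_pos_sub).mono ?_
      rintro n ⟨h1, h2⟩
      exact erw_pos_of_div_pos h1 h2
    · refine (hfn.and_eventually erw_a_pos_sub).mono ?_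
      rintro n ⟨h1, h2⟩
      have := erw_pos_of_div_pos h1 h2
      linarith
  · filter_upwards [hlil_crit hpeq] with ω hω
    have hc : (0:ℝ) < 2 := two_pos
    have hfp := erw_freq_pos_of_limsup hc hω.1
    have hfn := erw_freq_pos_of_limsup hc hω.2
    apply hgoal ω
    · refine (hfp.and_eventually erw_a_pos_crit).mono ?_
      rintro n ⟨h1, h2⟩
      exact erw_pos_of_div_pos h1 h2
    · refine (hfn.and_eventually erw_a_pos_crit).mono ?_
      rintro n ⟨h1, h2⟩
      have := erw_pos_of_div_pos h1 h2
      linarith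
end
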